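/- Let (X, Y, ⟨·,·⟩) be a dual pairing and C ⊆ X nonempty. For every n ≥ 1, the n-th Fitzpatrick function of the normal cone operator N_C satisfies φ⁽ⁿ⁾_{N_C}(x,y) = ι_{C^#}(x) + σ_C(y), where C^# := {x ∈ X : ⟨x - u, v⟩ ≤ 0 for all (u,v) ∈ Graph N_C} and σ_C(y) := sup_{u∈C} ⟨u,y⟩. -/
import Mathlib


open scoped Classical

variable {X Y : Type*} [AddCommGroup X] [Module ℝ X] [AddCommGroup Y] [Module ℝ Y]

/-- The graph of the normal cone operator `N_C` of `C ⊆ X`. -/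
def normalConeGraph (b : X →ₗ[ℝ] Y →ₗ[ℝ] ℝ) (C : Set X) : Set (X × Y) :=
  {p | p.1 ∈ C ∧ ∀ w ∈ C, b (w - p.1) p.2 ≤ 0}

/-- The portable hull `C^#` of `C`. -/
def portableHull (b : X →ₗ[ℝ] Y →ₗ[ℝ] ℝ) (C : Set X) : Set X :=
  {x | ∀ p ∈ normalConeGraph b C, b (x - p.1) p.2 ≤ 0}

/-- The `n`-th Fitzpatrick function of a relation `T ⊆ X × Y`. -/
noncomputable def fitz (b : X →ₗ[ℝ] Y →ₗ[ℝ] ℝ) (T : Set (X × Y)) (n : ℕ)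
    (x : X) (y : Y) : EReal :=
  sSup {r : EReal | ∃ c : ℕ → X × Y, (∀ i ∈ Finset.Icc 1 n, c i ∈ T) ∧
    r = ((b (x - (c 1).1) (c 1).2
        + ∑ i ∈ Finset.Icc 2 n, b ((c (i - 1)).1 - (c i).1) (c i).2
        + b (c n).1 y : ℝ) : EReal)}

/-- For nonempty `C` and every `n ≥ 1`,
`φ⁽ⁿ⁾_{N_C}(x,y) = ι_{C^#}(x) + σ_C(y)`. -/
theorem fitz_normalCone (b : X →ₗ[ℝ] Y →ₗ[ℝ] ℝ) (C : Set X) (hC : C.Nonempty)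
    (n : ℕ) (hn : 1 ≤ n) (x : X) (y : Y) :
    fitz b (normalConeGraph b C) n x y
      = (if x ∈ portableHull b C then (0 : EReal) else ⊤)
        + sSup {r : EReal | ∃ u ∈ C, r = ((b u y : ℝ) : EReal)} := by
  by_cases hx : x ∈ portableHull b C
  · rw [if_pos hx, zero_add]
    apply le_antisymm
    · refine sSup_le ?_
      rintro r ⟨c, hc, rfl⟩
      have hcn := hc n (Finset.mem_Icc.mpr ⟨hn, le_refl n⟩)
      have t1 : b (x - (c 1).1) (c 1).2 ≤ 0 :=
        hx _ (hc 1 (Finset.mem_Icc.mpr ⟨le_refl 1, hn⟩))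
      have t2 : ∑ i ∈ Finset.Icc 2 n, b ((c (i - 1)).1 - (c i).1) (c i).2 ≤ 0 := by
        apply Finset.sum_nonpos
        intro i hi
        obtain ⟨hi2, hin⟩ := Finset.mem_Icc.mp hi
        have hprev : c (i - 1) ∈ normalConeGraph b C :=
          hc (i - 1) (Finset.mem_Icc.mpr ⟨by omega, by omega⟩)
        exact (hc i (Finset.mem_Icc.mpr ⟨by omega, hin⟩)).2 _ hprev.1
      calc ((b (x - (c 1).1) (c 1).2
              + ∑ i ∈ Finset.Icc 2 n, b ((c (i - 1)).1 - (c i).1) (c i).2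
              + b (c n).1 y : ℝ) : EReal)
          ≤ ((b (c n).1 y : ℝ) : EReal) := by
            exact_mod_cast (by linarith : b (x - (c 1).1) (c 1).2
              + ∑ i ∈ Finset.Icc 2 n, b ((c (i - 1)).1 - (c i).1) (c i).2
              + b (c n).1 y ≤ b (c n).1 y)
        _ ≤ sSup {r : EReal | ∃ u ∈ C, r = ((b u y : ℝ) : EReal)} :=
            le_sSup ⟨(c n).1, hcn.1, rfl⟩
    · refine sSup_le ?_
      rintro r ⟨u, hu, rfl⟩
      apply le_sSup
      refine ⟨fun _ => (u, 0), fun i _ => ⟨hu, fun w _ => by simp⟩, by simp⟩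
  · rw [if_neg hx]
    have hx' : ∃ p ∈ normalConeGraph b C, 0 < b (x - p.1) p.2 := by
      simpa [portableHull, not_forall, not_le] using hx
    obtain ⟨p, hpT, hp⟩ := hx'
    obtain ⟨u0, hu0⟩ := hC
    have hσ : sSup {r : EReal | ∃ u ∈ C, r = ((b u y : ℝ) : EReal)} ≠ ⊥ := by
      intro h
      have hle : ((b u0 y : ℝ) : EReal) ≤ ⊥ := h ▸ le_sSup ⟨u0, hu0, rfl⟩
      simp at hle
    rw [EReal.top_add_of_ne_bot hσ]
    refine sSup_eq_top.mpr fun w hw => ?_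
    obtain ⟨M, hwM, -⟩ := EReal.lt_iff_exists_real_btwn.mp hw
    set u := p.1 with hu
    set v := p.2 with hv
    set ε := b (x - u) v with hε
    set t : ℝ := (|M| + |b u y| + 1) / ε with htdef
    have ht : 0 ≤ t := div_nonneg (by positivity) hp.le
    refine ⟨_, ⟨fun i => if i = 1 then (u, t • v) else (u, 0), fun i hi => ?_, rfl⟩, ?_⟩
    · by_cases h1 : i = 1
      · simp only [h1, if_pos]
        refine ⟨hpT.1, fun w hw => ?_⟩
        have := hpT.2 w hw
        simp only [map_smul, smul_eq_mul]
        exact mul_nonpos_of_nonneg_of_nonpos ht this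
      · simp only [h1, if_neg, if_false]
        exact ⟨hpT.1, fun w _ => by simp⟩
    · have hsum : ∑ i ∈ Finset.Icc 2 n,
          b (((fun i => if i = 1 then (u, t • v) else (u, 0)) (i - 1)).1
            - ((fun i => if i = 1 then (u, t • v) else (u, 0)) i).1)
            ((fun i => if i = 1 then (u, t • v) else (u, 0)) i).2 = 0 := by
        apply Finset.sum_eq_zero
        intro i hi
        obtain ⟨hi2, _⟩ := Finset.mem_Icc.mp hi
        have : i ≠ 1 := by omega
        simp [this]
      have hcn1 : ((fun i => if i = 1 then (u, t • v) else (u, 0)) n).1 = u := by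
        by_cases h : n = 1 <;> simp [h]
      refine lt_trans hwM ?_
      rw [EReal.coe_lt_coe_iff]
      simp only [hsum, hcn1, eq_self_iff_true, if_true, ite_true]
      have htε : t * ε = |M| + |b u y| + 1 :=
        div_mul_cancel₀ _ (ne_of_gt hp)
      have hbv : b (x - u) (t • v) = t * ε := by
        simp [map_smul, smul_eq_mul, hε]
      rw [hbv, htε]
      have := le_abs_self M
      have := neg_abs_le (b u y)
      linarith
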